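/- Let N ≥ 2, Γ₁,…,Γ_N ∈ ℝ, ε ∈ ℝ, and let r⃗₁,…,r⃗_N : I → ℝ³ be differentiable curves on an interval I with r⃗ᵢ(t) ≠ r⃗ⱼ(t) for all i ≠ j and t ∈ I, satisfying the first-order truncated N-vortex equations on the ellipsoid: r⃗ᵢ' = Σ_{j≠i} Γⱼ [ (r⃗ⱼ × r⃗ᵢ)/‖r⃗ᵢ − r⃗ⱼ‖² + ε zᵢ (r⃗ᵢ × ê₃) ], where zᵢ = r⃗ᵢ · ê₃ and ê₃ = (0,0,1). Then the z-component of the center of vorticity, c_z(t) = Σᵢ Γᵢ zᵢ(t), is constant on I. -/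

import Mathlib

open Real

/-- Cross product on `ℝ³`. -/
noncomputable def cross3 (a b : EuclideanSpace ℝ (Fin 3)) : EuclideanSpace ℝ (Fin 3) :=
  WithLp.toLp 2 ![a 1 * b 2 - a 2 * b 1, a 2 * b 0 - a 0 * b 2, a 0 * b 1 - a 1 * b 0]

/-- The unit vector `ê₃ = (0,0,1)`. -/
noncomputable def e₃ : EuclideanSpace ℝ (Fin 3) := WithLp.toLp 2 ![0, 0, 1]

/-!
Only the third coordinate of the equations of motion matters. The term `ε zᵢ (r⃗ᵢ × ê₃)` is
horizontal, so `Γᵢ zᵢ'` is a sum over `j ≠ i` of `Γᵢ Γⱼ (r⃗ⱼ × r⃗ᵢ)_z / ‖r⃗ᵢ − r⃗ⱼ‖²`, which is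
antisymmetric in `(i, j)`. Hence `c_z' = 0` on `I`, and `c_z` is constant on the convex set `I`.
-/

lemma cross3_anticomm (a b : EuclideanSpace ℝ (Fin 3)) : -cross3 a b = cross3 b a := by
  ext k
  fin_cases k <;> simp [cross3] <;> ring

lemma cross3_e₃_apply_two (a : EuclideanSpace ℝ (Fin 3)) : cross3 a e₃ 2 = 0 := by
  simp [cross3, e₃]

lemma Finset.sum_sum_erase_eq_zero_of_antisymm {ι M : Type*} [Fintype ι] [DecidableEq ι]
    [AddCommGroup M] [IsAddTorsionFree M] {F : ι → ι → M} (hF : ∀ i j, F i j = -F j i) :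
    ∑ i, ∑ j ∈ univ.erase i, F i j = 0 := by
  have hdiag (i : ι) : F i i = 0 := neg_eq_self.mp (hF i i).symm
  simp only [Finset.sum_erase _ (hdiag _)]
  refine neg_eq_self.mp ?_
  calc -∑ i, ∑ j, F i j = ∑ i, ∑ j, F j i := by
        simp only [← Finset.sum_neg_distrib, ← hF]
    _ = ∑ i, ∑ j, F i j := Finset.sum_comm

noncomputable def vortexVelocity {ι : Type*} [Fintype ι] [DecidableEq ι] (Γ : ι → ℝ) (ε : ℝ)
    (x : ι → EuclideanSpace ℝ (Fin 3)) (i : ι) : EuclideanSpace ℝ (Fin 3) :=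
  ∑ j ∈ Finset.univ.erase i,
    Γ j • ((‖x i - x j‖ ^ 2)⁻¹ • cross3 (x j) (x i) + (ε * x i 2) • cross3 (x i) e₃)

lemma sum_mul_vortexVelocity_apply_two {ι : Type*} [Fintype ι] [DecidableEq ι] (Γ : ι → ℝ)
    (ε : ℝ) (x : ι → EuclideanSpace ℝ (Fin 3)) :
    ∑ i, Γ i * vortexVelocity Γ ε x i 2 = 0 := by
  have hcoord (i : ι) : Γ i * vortexVelocity Γ ε x i 2 =
      ∑ j ∈ Finset.univ.erase i, Γ i * Γ j * ((‖x i - x j‖ ^ 2)⁻¹ * cross3 (x j) (x i) 2) := by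
    simp [vortexVelocity, cross3_e₃_apply_two, Finset.mul_sum, mul_assoc]
  simp only [hcoord]
  refine Finset.sum_sum_erase_eq_zero_of_antisymm fun i j => ?_
  rw [norm_sub_rev, ← cross3_anticomm]
  simp only [PiLp.neg_apply]
  ring

lemma Convex.is_const_of_hasDerivWithinAt_zero {E : Type*} [NormedAddCommGroup E]
    [NormedSpace ℝ E] {f : ℝ → E} {s : Set ℝ} (hs : Convex ℝ s)
    (hf : ∀ x ∈ s, HasDerivWithinAt f 0 s x) {x y : ℝ} (hx : x ∈ s) (hy : y ∈ s) :
    f x = f y := by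
  have h := hs.norm_image_sub_le_of_norm_hasDerivWithin_le hf (C := 0) (by simp) hx hy
  rw [zero_mul, norm_le_zero_iff, sub_eq_zero] at h
  exact h.symm

theorem cz_conserved_ellipsoid_general
    (N : ℕ) (Γ : Fin N → ℝ) (ε : ℝ)
    (I : Set ℝ) (hI : I.OrdConnected)
    (r : Fin N → ℝ → EuclideanSpace ℝ (Fin 3))
    (heq : ∀ i : Fin N, ∀ t ∈ I,
      HasDerivAt (r i)
        (∑ j ∈ Finset.univ.erase i,
          Γ j • ((‖r i t - r j t‖ ^ 2)⁻¹ • cross3 (r j t) (r i t)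
            + (ε * (r i t 2)) • cross3 (r i t) e₃)) t) :
    ∀ s ∈ I, ∀ t ∈ I, ∑ i, Γ i * r i s 2 = ∑ i, Γ i * r i t 2 := by
  have hcz : ∀ t ∈ I, HasDerivWithinAt (fun t => ∑ i, Γ i * r i t 2) 0 I t := by
    intro t ht
    have hz (i : Fin N) : HasDerivAt (fun t => r i t 2)
        (vortexVelocity Γ ε (fun j => r j t) i 2) t :=
      (EuclideanSpace.proj (2 : Fin 3) : EuclideanSpace ℝ (Fin 3) →L[ℝ] ℝ).hasFDerivAt
        |>.comp_hasDerivAt t (heq i t ht)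
    have h := HasDerivAt.fun_sum (u := Finset.univ) fun i _ => (hz i).const_mul (Γ i)
    rw [sum_mul_vortexVelocity_apply_two] at h
    exact h.hasDerivWithinAt
  exact fun s hs t ht => hI.convex.is_const_of_hasDerivWithinAt_zero hcz hs ht

/-- For solutions of the first-order truncated N-vortex equations on
the ellipsoid, `r⃗ᵢ' = Σ_{j≠i} Γⱼ [(r⃗ⱼ × r⃗ᵢ)/‖r⃗ᵢ − r⃗ⱼ‖² + ε zᵢ (r⃗ᵢ × ê₃)]` with
`zᵢ = r⃗ᵢ · ê₃`, the z-component of the center of vorticity `c_z = Σᵢ Γᵢ zᵢ` is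
constant on the interval `I`. -/
theorem cz_conserved_ellipsoid
    (N : ℕ) (hN : 2 ≤ N) (Γ : Fin N → ℝ) (ε : ℝ)
    (I : Set ℝ) (hI : I.OrdConnected)
    (r : Fin N → ℝ → EuclideanSpace ℝ (Fin 3))
    (hsep : ∀ t ∈ I, ∀ i j : Fin N, i ≠ j → r i t ≠ r j t)
    (heq : ∀ i : Fin N, ∀ t ∈ I,
      HasDerivAt (r i)
        (∑ j ∈ Finset.univ.erase i,
          Γ j • ((‖r i t - r j t‖ ^ 2)⁻¹ • cross3 (r j t) (r i t)
            + (ε * (r i t 2)) • cross3 (r i t) e₃)) t) :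
    ∀ s ∈ I, ∀ t ∈ I, ∑ i, Γ i * r i s 2 = ∑ i, Γ i * r i t 2 :=
  cz_conserved_ellipsoid_general N Γ ε I hI r heq
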